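/- Let R be a G-graded ring, S a graded simple left R-module with inertia group Σ(S) = {g ∈ G : S(g) ≅ S}, and g_1,…,g_n,h_1,…,h_n ∈ G. Then S(g_1) ⊕ … ⊕ S(g_n) ≅ S(h_1) ⊕ … ⊕ S(h_n) as graded left R-modules if and only if the list of left cosets g_1Σ(S),…,g_nΣ(S) is a permutation of h_1Σ(S),…,h_nΣ(S). -/

import Mathlib

open DirectSum

universe u v w

variable {G : Type u} [Group G] [DecidableEq G]
variable {R : Type v} [Ring R]

/-- `𝒜` is a `G`-grading of the ring `R`: homogeneous components are additive
subgroups, `1` is homogeneous of trivial degree, multiplication respects degrees,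
and `R` is the internal direct sum of the components. -/
def IsGRing (𝒜 : G → AddSubgroup R) : Prop :=
  (1 : R) ∈ 𝒜 1 ∧
  (∀ (g h : G) (a b : R), a ∈ 𝒜 g → b ∈ 𝒜 h → a * b ∈ 𝒜 (g * h)) ∧
  DirectSum.IsInternal 𝒜

/-- A left ideal is graded when it is spanned by its homogeneous elements. -/
def IsGradedLeftIdeal (𝒜 : G → AddSubgroup R) (I : Submodule R R) : Prop :=
  I = Submodule.span R ((I : Set R) ∩ ⋃ g, (𝒜 g : Set R))

/-- A minimal graded left ideal (a graded-simple graded left submodule of `R`). -/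
def IsMinGradedLeftIdeal (𝒜 : G → AddSubgroup R) (S : Submodule R R) : Prop :=
  IsGradedLeftIdeal 𝒜 S ∧ S ≠ ⊥ ∧
    ∀ T : Submodule R R, T ≤ S → IsGradedLeftIdeal 𝒜 T → T = ⊥ ∨ T = S

/-- A maximal graded left ideal. -/
def IsMaxGradedLeftIdeal (𝒜 : G → AddSubgroup R) (I : Submodule R R) : Prop :=
  IsGradedLeftIdeal 𝒜 I ∧ I ≠ ⊤ ∧
    ∀ J : Submodule R R, IsGradedLeftIdeal 𝒜 J → I < J → J = ⊤

/-- The graded Jacobson radical: intersection of all maximal graded left ideals. -/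
def grJacobson (𝒜 : G → AddSubgroup R) : Submodule R R :=
  sInf {I : Submodule R R | IsMaxGradedLeftIdeal 𝒜 I}

/-- Left annihilator of a subset of `R`. -/
def annLset (X : Set R) : Set R := {r : R | ∀ x ∈ X, r * x = 0}

/-- Right annihilator of a subset of `R`. -/
def annRset (X : Set R) : Set R := {r : R | ∀ x ∈ X, x * r = 0}

/-- Left annihilator of an element, as a left ideal. -/
def annLIdeal (x : R) : Submodule R R where
  carrier := {r : R | r * x = 0}
  add_mem' := by
    intro a b ha hb
    simp only [Set.mem_setOf_eq] at *
    rw [add_mul, ha, hb, add_zero]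
  zero_mem' := by simp
  smul_mem' := by
    intro c a ha
    simp only [Set.mem_setOf_eq, smul_eq_mul] at *
    rw [mul_assoc, ha, mul_zero]

/-- A left ideal is essential if it meets every nonzero left ideal nontrivially. -/
def IsEssentialLeftIdeal (I : Submodule R R) : Prop :=
  ∀ J : Submodule R R, J ≠ ⊥ → I ⊓ J ≠ ⊥

/-- Homogeneous part of degree `g` of the graded singular ideal. -/
def grSingSet (𝒜 : G → AddSubgroup R) (g : G) : Set R :=
  {x : R | x ∈ 𝒜 g ∧ IsEssentialLeftIdeal (annLIdeal x)}

/-- The graded singular ideal `Z^gr(R) = ⊕_g Z^gr(R)_g`. -/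
def grSing (𝒜 : G → AddSubgroup R) : AddSubgroup R :=
  AddSubgroup.closure (⋃ g, grSingSet 𝒜 g)

/-- `R` is graded left self-injective (graded Baer criterion): every morphism of
degree `σ` from a graded left ideal to `R` is right multiplication by an element
of degree `σ`. -/
def GrLeftSelfInjective (𝒜 : G → AddSubgroup R) : Prop :=
  ∀ I : Submodule R R, IsGradedLeftIdeal 𝒜 I → ∀ σ : G, ∀ f : I →ₗ[R] R,
    (∀ (g : G) (x : I), (x : R) ∈ 𝒜 g → f x ∈ 𝒜 (g * σ)) →
    ∃ m ∈ 𝒜 σ, ∀ x : I, f x = (x : R) * m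

/-- Ascending chain condition on graded left ideals. -/
def GrLeftNoetherian (𝒜 : G → AddSubgroup R) : Prop :=
  ∀ f : ℕ → Submodule R R, (∀ n, IsGradedLeftIdeal 𝒜 (f n)) → Monotone f →
    ∃ n, ∀ m, n ≤ m → f m = f n

/-- Descending chain condition on graded left ideals. -/
def GrLeftArtinian (𝒜 : G → AddSubgroup R) : Prop :=
  ∀ f : ℕ → Submodule R R, (∀ n, IsGradedLeftIdeal 𝒜 (f n)) → Antitone f →
    ∃ n, ∀ m, n ≤ m → f m = f n

/-- Graded von Neumann regularity. -/
def GrVNRegular (𝒜 : G → AddSubgroup R) : Prop :=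
  ∀ (g : G) (a : R), a ∈ 𝒜 g → ∃ b : R, a = a * b * a

/-- Graded semisimplicity: `R` is the sum of its minimal graded left ideals. -/
def GrSemisimple (𝒜 : G → AddSubgroup R) : Prop :=
  sSup {S : Submodule R R | IsMinGradedLeftIdeal 𝒜 S} = (⊤ : Submodule R R)

/-- `ℳ` is a `G`-grading of the left `R`-module `M`, compatible with `𝒜`. -/
def IsGModule (𝒜 : G → AddSubgroup R) {M : Type w} [AddCommGroup M] [Module R M]
    (ℳ : G → AddSubgroup M) : Prop :=
  (∀ (g h : G) (a : R) (m : M), a ∈ 𝒜 g → m ∈ ℳ h → a • m ∈ ℳ (g * h)) ∧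
  DirectSum.IsInternal ℳ

/-- A submodule is graded when it is spanned by its homogeneous elements. -/
def IsGradedSubmodule {M : Type w} [AddCommGroup M] [Module R M]
    (ℳ : G → AddSubgroup M) (N : Submodule R M) : Prop :=
  N = Submodule.span R ((N : Set M) ∩ ⋃ g, (ℳ g : Set M))

/-- The inertia group of the graded module `S`: those `σ` with `S(σ) ≅ S` in
`R`-gr. -/
def inertiaSet {S : Type w} [AddCommGroup S] [Module R S]
    (𝒮 : G → AddSubgroup S) : Set G :=
  {σ : G | ∃ e : S ≃ₗ[R] S, ∀ (h : G) (x : S), x ∈ 𝒮 (h * σ) ↔ e x ∈ 𝒮 h}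

/-!
Restricting a graded isomorphism `⊕ S(g_i) ≅ ⊕ S(h_i)` to the first summand and projecting to a
suitable coordinate `j` gives a nonzero graded morphism `S(g_1) → S(h_j)`; by the graded Schur
lemma it is an isomorphism, so `g_1⁻¹ h_j ∈ Σ(S)`. Since this block of the isomorphism is
invertible, its Schur complement is a graded isomorphism between the remaining summands, and
induction on `n` assembles the permutation. Conversely, a matching of the cosets gives summandwise
isomorphisms `S(g_i) ≅ S(h_{π i})`.
-/

section GradedEquiv

variable {Γ M N P : Type*} [AddCommGroup M] [Module R M] [AddCommGroup N] [Module R N]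
  [AddCommGroup P] [Module R P]

def IsGradedEquiv (𝓜 : Γ → AddSubgroup M) (𝓝 : Γ → AddSubgroup N) (e : M ≃ₗ[R] N) : Prop :=
  ∀ (h : Γ) (x : M), x ∈ 𝓜 h ↔ e x ∈ 𝓝 h

variable (R) in
def IsGradedSimple (𝓜 : Γ → AddSubgroup M) : Prop :=
  ∀ x : M, x ≠ 0 → (∃ h, x ∈ 𝓜 h) → Submodule.span R {x} = ⊤

def shiftGrading [Mul Γ] (𝓜 : Γ → AddSubgroup M) (g : Γ) (h : Γ) : AddSubgroup M := 𝓜 (h * g)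

def piGrading {ι : Type*} (𝓜 : ι → Γ → AddSubgroup M) (h : Γ) : AddSubgroup (ι → M) :=
  AddSubgroup.pi Set.univ fun i => 𝓜 i h

def prodGrading (𝓜 : Γ → AddSubgroup M) (𝓝 : Γ → AddSubgroup N) (h : Γ) :
    AddSubgroup (M × N) :=
  (𝓜 h).prod (𝓝 h)

theorem mem_piGrading {ι : Type*} {𝓜 : ι → Γ → AddSubgroup M} {h : Γ} {v : ι → M} :
    v ∈ piGrading 𝓜 h ↔ ∀ i, v i ∈ 𝓜 i h := by
  simp [piGrading, AddSubgroup.mem_pi]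

theorem mem_prodGrading {𝓜 : Γ → AddSubgroup M} {𝓝 : Γ → AddSubgroup N} {h : Γ} {p : M × N} :
    p ∈ prodGrading 𝓜 𝓝 h ↔ p.1 ∈ 𝓜 h ∧ p.2 ∈ 𝓝 h :=
  AddSubgroup.mem_prod

namespace IsGradedEquiv

variable {𝓜 : Γ → AddSubgroup M} {𝓝 : Γ → AddSubgroup N} {𝓟 : Γ → AddSubgroup P}

theorem of_forall_mem {e : M ≃ₗ[R] N} (hto : ∀ h x, x ∈ 𝓜 h → e x ∈ 𝓝 h)
    (hinv : ∀ h y, y ∈ 𝓝 h → e.symm y ∈ 𝓜 h) : IsGradedEquiv 𝓜 𝓝 e :=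
  fun h x => ⟨hto h x, fun hx => by simpa using hinv h (e x) hx⟩

theorem symm {e : M ≃ₗ[R] N} (he : IsGradedEquiv 𝓜 𝓝 e) : IsGradedEquiv 𝓝 𝓜 e.symm :=
  fun h y => by simpa using (he h (e.symm y)).symm

theorem trans {e : M ≃ₗ[R] N} {f : N ≃ₗ[R] P} (he : IsGradedEquiv 𝓜 𝓝 e)
    (hf : IsGradedEquiv 𝓝 𝓟 f) : IsGradedEquiv 𝓜 𝓟 (e.trans f) :=
  fun h x => (he h x).trans (hf h (e x))

theorem shiftGrading_of_inv_mul [Group Γ] {a : M ≃ₗ[R] M} {g g' : Γ}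
    (ha : IsGradedEquiv 𝓜 (shiftGrading 𝓜 (g⁻¹ * g')) a) :
    IsGradedEquiv (shiftGrading 𝓜 g) (shiftGrading 𝓜 g') a :=
  fun h x => by simpa [shiftGrading, mul_assoc] using ha (h * g) x

end IsGradedEquiv

theorem isGradedEquiv_piCongrRight {ι : Type*} {𝓜 : ι → Γ → AddSubgroup M}
    {𝓝 : ι → Γ → AddSubgroup N} {e : ι → M ≃ₗ[R] N} (he : ∀ i, IsGradedEquiv (𝓜 i) (𝓝 i) (e i)) :
    IsGradedEquiv (piGrading 𝓜) (piGrading 𝓝) (LinearEquiv.piCongrRight e) :=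
  fun h v => by simp only [mem_piGrading, LinearEquiv.piCongrRight_apply, he _ h]

theorem isGradedEquiv_funCongrLeft {ι ι' : Type*} (𝓜 : ι → Γ → AddSubgroup M) (π : ι' ≃ ι) :
    IsGradedEquiv (piGrading 𝓜) (piGrading (𝓜 ∘ π)) (LinearEquiv.funCongrLeft R M π) :=
  fun h v => by
    simp only [mem_piGrading, LinearEquiv.funCongrLeft_apply, LinearMap.funLeft_apply,
      Function.comp_apply]
    exact π.forall_congr_right.symm

variable (R M) in
def LinearEquiv.piFinSuccAbove {n : ℕ} (j : Fin (n + 1)) :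
    (Fin (n + 1) → M) ≃ₗ[R] M × (Fin n → M) :=
  { (Fin.insertNthEquiv (fun _ => M) j).symm with
    map_add' := fun _ _ => rfl
    map_smul' := fun _ _ => rfl }

theorem isGradedEquiv_piFinSuccAbove {n : ℕ} (𝓜 : Fin (n + 1) → Γ → AddSubgroup M)
    (j : Fin (n + 1)) :
    IsGradedEquiv (piGrading 𝓜) (prodGrading (𝓜 j) (piGrading fun i => 𝓜 (j.succAbove i)))
      (LinearEquiv.piFinSuccAbove R M j) :=
  fun h v => by
    simp only [mem_piGrading, mem_prodGrading]
    exact Fin.forall_iff_succAbove j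

end GradedEquiv

section SchurComplement

variable {Γ M₁ M₂ N₁ N₂ : Type*} [AddCommGroup M₁] [Module R M₁] [AddCommGroup M₂] [Module R M₂]
  [AddCommGroup N₁] [Module R N₁] [AddCommGroup N₂] [Module R N₂]
  {e : (M₁ × M₂) ≃ₗ[R] (N₁ × N₂)} {a : M₁ ≃ₗ[R] N₁}

theorem LinearEquiv.apply_neg_symm_fst_apply (hae : ∀ x, (e (x, 0)).1 = a x) (v : M₂) :
    e (-a.symm (e (0, v)).1, v) = (0, (e (-a.symm (e (0, v)).1, v)).2) := by
  refine Prod.ext ?_ rfl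
  have hsplit : (-a.symm (e (0, v)).1, v) = (-a.symm (e (0, v)).1, 0) + (0, v) := by simp
  rw [hsplit, map_add, Prod.fst_add, hae]
  simp

variable (e a) in
/-- Writing `e` as a block matrix `[[a, b], [c, d]]`, this is `d - c a⁻¹ b`. -/
def LinearEquiv.schurComplement (hae : ∀ x, (e (x, 0)).1 = a x) : M₂ ≃ₗ[R] N₂ :=
  LinearEquiv.ofLinearMap
    (LinearMap.snd R N₁ N₂ ∘ₗ e.toLinearMap ∘ₗ
      (-(a.symm.toLinearMap ∘ₗ LinearMap.fst R N₁ N₂ ∘ₗ e.toLinearMap ∘ₗ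
        LinearMap.inr R M₁ M₂)).prod LinearMap.id)
    (LinearMap.snd R M₁ M₂ ∘ₗ e.symm.toLinearMap ∘ₗ LinearMap.inr R N₁ N₂)
    (LinearMap.ext fun w => by
      set u := e.symm (0, w)
      have hu : -a.symm (e (0, u.2)).1 = u.1 := by
        have hsplit : ((0 : M₁), u.2) = u - (u.1, 0) := by ext <;> simp
        simp [hsplit, hae, u]
      change (e (-a.symm (e (0, u.2)).1, u.2)).2 = w
      rw [hu, e.apply_symm_apply])
    (LinearMap.ext fun v => by
      change (e.symm (0, (e (-a.symm (e (0, v)).1, v)).2)).2 = v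
      rw [← LinearEquiv.apply_neg_symm_fst_apply hae, e.symm_apply_apply])

theorem isGradedEquiv_schurComplement {𝓜₁ : Γ → AddSubgroup M₁} {𝓜₂ : Γ → AddSubgroup M₂}
    {𝓝₁ : Γ → AddSubgroup N₁} {𝓝₂ : Γ → AddSubgroup N₂}
    (he : IsGradedEquiv (prodGrading 𝓜₁ 𝓜₂) (prodGrading 𝓝₁ 𝓝₂) e) (ha : IsGradedEquiv 𝓜₁ 𝓝₁ a)
    (hae : ∀ x, (e (x, 0)).1 = a x) : IsGradedEquiv 𝓜₂ 𝓝₂ (e.schurComplement a hae) := by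
  refine .of_forall_mem (fun h v hv => ?_) (fun h w hw => ?_)
  · have h0 := (he h (0, v)).1 (mem_prodGrading.2 ⟨zero_mem _, hv⟩)
    have h1 : (-a.symm (e (0, v)).1, v) ∈ prodGrading 𝓜₁ 𝓜₂ h :=
      mem_prodGrading.2 ⟨neg_mem ((ha.symm h _).1 (mem_prodGrading.1 h0).1), hv⟩
    exact (mem_prodGrading.1 ((he h _).1 h1)).2
  · exact (mem_prodGrading.1 ((he.symm h (0, w)).1 (mem_prodGrading.2 ⟨zero_mem _, hw⟩))).2

end SchurComplement

section GradedSchur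

variable {S : Type*} [AddCommGroup S] [Module R S] {𝒮 : G → AddSubgroup S} [Decomposition 𝒮]
  {σ : G} {f : S →ₗ[R] S}

theorem decompose_apply_mul_of_forall_mem (hf : ∀ k x, x ∈ 𝒮 k → f x ∈ 𝒮 (k * σ)) (x : S) (k : G) :
    (decompose 𝒮 (f x) (k * σ) : S) = f (decompose 𝒮 x k) := by
  induction x using DirectSum.Decomposition.inductionOn 𝒮 with
  | zero => simp
  | @homogeneous i y =>
    obtain ⟨y, hy⟩ := y
    rcases eq_or_ne i k with rfl | hik
    · rw [decompose_of_mem_same 𝒮 hy, decompose_of_mem_same 𝒮 (hf _ _ hy)]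
    · rw [decompose_of_mem_ne 𝒮 hy hik,
        decompose_of_mem_ne 𝒮 (hf _ _ hy) ((mul_left_injective σ).ne hik), map_zero]
  | add x y hx hy => simp [hx, hy]

theorem bijective_of_ne_zero_of_isGradedSimple (hsimple : IsGradedSimple R 𝒮)
    (hf : ∀ k x, x ∈ 𝒮 k → f x ∈ 𝒮 (k * σ)) (hne : f ≠ 0) : Function.Bijective f := by
  obtain ⟨k, y, hy, hfy⟩ : ∃ k y, y ∈ 𝒮 k ∧ f y ≠ 0 := by
    by_contra! h
    refine hne (LinearMap.ext fun x => ?_)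
    induction x using DirectSum.Decomposition.inductionOn 𝒮 with
    | zero => simp
    | homogeneous y => exact h _ y y.2
    | add x y hx hy => simp [hx, hy]
  have hker_ne_top : LinearMap.ker f ≠ ⊤ := fun htop =>
    hfy (LinearMap.mem_ker.1 (htop ▸ Submodule.mem_top))
  refine ⟨?_, ?_⟩
  · rw [← LinearMap.ker_eq_bot, eq_bot_iff]
    intro x hx
    have hcomp : ∀ j, (decompose 𝒮 x j : S) = 0 := by
      intro j
      by_contra hj
      refine hker_ne_top (top_le_iff.1 ?_)
      rw [← hsimple _ hj ⟨j, (decompose 𝒮 x j).2⟩, Submodule.span_le, Set.singleton_subset_iff]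
      simp [LinearMap.mem_ker, ← decompose_apply_mul_of_forall_mem hf, LinearMap.mem_ker.1 hx]
    rw [Submodule.mem_bot, ← (decompose 𝒮).injective.eq_iff, decompose_zero]
    ext j
    simp [hcomp]
  · rw [← LinearMap.range_eq_top, eq_top_iff, ← hsimple (f y) hfy ⟨k * σ, hf k y hy⟩]
    exact Submodule.span_le.2 (Set.singleton_subset_iff.2 ⟨y, rfl⟩)

theorem exists_isGradedEquiv_of_ne_zero (hsimple : IsGradedSimple R 𝒮)
    (hf : ∀ k x, x ∈ 𝒮 k → f x ∈ 𝒮 (k * σ)) (hne : f ≠ 0) :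
    ∃ a : S ≃ₗ[R] S, ⇑a = f ∧ IsGradedEquiv 𝒮 (shiftGrading 𝒮 σ) a := by
  have hbij := bijective_of_ne_zero_of_isGradedSimple hsimple hf hne
  refine ⟨LinearEquiv.ofBijective f hbij, rfl, fun h x => ⟨hf h x, fun hx => ?_⟩⟩
  replace hx : f x ∈ 𝒮 (h * σ) := hx
  have hx' : (decompose 𝒮 x h : S) = x := hbij.1 <| by
    rw [← decompose_apply_mul_of_forall_mem hf, decompose_of_mem_same 𝒮 hx]
  exact hx' ▸ (decompose 𝒮 x h).2

end GradedSchur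

section Inertia

variable {S : Type*} [AddCommGroup S] [Module R S] {𝒮 : G → AddSubgroup S}

omit [DecidableEq G] in
theorem mem_inertiaSet_iff {σ : G} :
    σ ∈ inertiaSet (R := R) 𝒮 ↔ ∃ a : S ≃ₗ[R] S, IsGradedEquiv 𝒮 (shiftGrading 𝒮 σ) a :=
  ⟨fun ⟨e, he⟩ => ⟨e.symm, IsGradedEquiv.symm (𝓜 := shiftGrading 𝒮 σ) he⟩,
    fun ⟨a, ha⟩ => ⟨a.symm, ha.symm⟩⟩

omit [DecidableEq G] in
theorem exists_isGradedEquiv_of_equiv {ι ι' : Type*} {gv : ι → G} {hv : ι' → G} (π : ι ≃ ι')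
    (hπ : ∀ i, (gv i)⁻¹ * hv (π i) ∈ inertiaSet (R := R) 𝒮) :
    ∃ e : (ι → S) ≃ₗ[R] (ι' → S), IsGradedEquiv (piGrading fun i => shiftGrading 𝒮 (gv i))
      (piGrading fun i => shiftGrading 𝒮 (hv i)) e := by
  choose a ha using fun i => mem_inertiaSet_iff.1 (hπ i)
  exact ⟨(LinearEquiv.piCongrRight a).trans (LinearEquiv.funCongrLeft R S π).symm,
    (isGradedEquiv_piCongrRight fun i => (ha i).shiftGrading_of_inv_mul).trans
      (isGradedEquiv_funCongrLeft (fun i => shiftGrading 𝒮 (hv i)) π).symm⟩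

variable [Decomposition 𝒮]

theorem exists_mem_inertiaSet_and_isGradedEquiv_succAbove (hsimple : IsGradedSimple R 𝒮)
    (hnz : ∃ x : S, x ≠ 0) {n : ℕ} {gv hv : Fin (n + 1) → G}
    {e : (Fin (n + 1) → S) ≃ₗ[R] (Fin (n + 1) → S)}
    (he : IsGradedEquiv (piGrading fun i => shiftGrading 𝒮 (gv i))
      (piGrading fun i => shiftGrading 𝒮 (hv i)) e) :
    ∃ j, (gv 0)⁻¹ * hv j ∈ inertiaSet (R := R) 𝒮 ∧ ∃ e' : (Fin n → S) ≃ₗ[R] (Fin n → S),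
      IsGradedEquiv (piGrading fun i => shiftGrading 𝒮 (gv (Fin.succAbove 0 i)))
        (piGrading fun i => shiftGrading 𝒮 (hv (j.succAbove i))) e' := by
  obtain ⟨x, hx⟩ := hnz
  set E₀ := (LinearEquiv.piFinSuccAbove R S 0).symm.trans e
  obtain ⟨j, hj⟩ : ∃ j, E₀ (x, 0) j ≠ 0 := by
    by_contra! h
    exact hx (congrArg Prod.fst (E₀.injective ((funext h).trans (map_zero E₀).symm)))
  set E := E₀.trans (LinearEquiv.piFinSuccAbove R S j)
  have hE := ((isGradedEquiv_piFinSuccAbove _ 0).symm.trans he).trans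
    (isGradedEquiv_piFinSuccAbove _ j)
  set f := LinearMap.fst R S (Fin n → S) ∘ₗ E.toLinearMap ∘ₗ LinearMap.inl R S (Fin n → S)
  have hf : ∀ k y, y ∈ 𝒮 k → f y ∈ 𝒮 (k * ((gv 0)⁻¹ * hv j)) := by
    intro k y hy
    have hy' : (y, 0) ∈ prodGrading (shiftGrading 𝒮 (gv 0))
        (piGrading fun i => shiftGrading 𝒮 (gv (Fin.succAbove 0 i))) (k * (gv 0)⁻¹) :=
      mem_prodGrading.2 ⟨by simpa [shiftGrading] using hy, zero_mem _⟩
    have hfy : f y ∈ 𝒮 (k * (gv 0)⁻¹ * hv j) := (mem_prodGrading.1 ((hE _ _).1 hy')).1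
    rwa [mul_assoc] at hfy
  obtain ⟨a, haf, ha⟩ :=
    exists_isGradedEquiv_of_ne_zero hsimple hf fun h0 => hj (LinearMap.congr_fun h0 x)
  have hae : ∀ y, (E (y, 0)).1 = a y := fun y => (congrFun haf y).symm
  exact ⟨j, mem_inertiaSet_iff.2 ⟨a, ha⟩, E.schurComplement a hae,
    isGradedEquiv_schurComplement hE ha.shiftGrading_of_inv_mul hae⟩

theorem exists_perm_of_isGradedEquiv (hsimple : IsGradedSimple R 𝒮) (hnz : ∃ x : S, x ≠ 0)
    {n : ℕ} {gv hv : Fin n → G} {e : (Fin n → S) ≃ₗ[R] (Fin n → S)}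
    (he : IsGradedEquiv (piGrading fun i => shiftGrading 𝒮 (gv i))
      (piGrading fun i => shiftGrading 𝒮 (hv i)) e) :
    ∃ π : Equiv.Perm (Fin n), ∀ i, (gv i)⁻¹ * hv (π i) ∈ inertiaSet (R := R) 𝒮 := by
  induction n with
  | zero => exact ⟨1, fun i => i.elim0⟩
  | succ n ih =>
    obtain ⟨j, hj, e', he'⟩ := exists_mem_inertiaSet_and_isGradedEquiv_succAbove hsimple hnz he
    obtain ⟨π', hπ'⟩ := ih he'
    -- `π` sends `0` to `j` and `i.succ` to `j.succAbove (π' i)`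
    refine ⟨(finSuccEquiv n).trans ((Equiv.optionCongr π').trans (finSuccEquiv' j).symm),
      Fin.cases ?_ fun i => ?_⟩
    · simpa using hj
    · simpa using hπ' i

end Inertia

theorem direct_sum_of_shifts_iso_iff_cosets_permuted_general
    (𝒜 : G → AddSubgroup R)
    {S : Type w} [AddCommGroup S] [Module R S]
    (𝒮 : G → AddSubgroup S) (hS : IsGModule 𝒜 𝒮)
    (hSnz : ∃ x : S, x ≠ 0)
    (hSsimple : ∀ x : S, x ≠ 0 → (∃ h : G, x ∈ 𝒮 h) →
      Submodule.span R {x} = (⊤ : Submodule R S))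
    (n : ℕ) (gv hv : Fin n → G) :
    (∃ e : (Fin n → S) ≃ₗ[R] (Fin n → S),
        ∀ (h : G) (v : Fin n → S),
          (∀ i, v i ∈ 𝒮 (h * gv i)) ↔ (∀ i, e v i ∈ 𝒮 (h * hv i))) ↔
      ∃ π : Equiv.Perm (Fin n), ∀ i, (gv i)⁻¹ * hv (π i) ∈ inertiaSet (R := R) 𝒮 := by
  let _ : Decomposition 𝒮 := hS.2.chooseDecomposition
  have hgr : ∀ e : (Fin n → S) ≃ₗ[R] (Fin n → S), (∀ (h : G) (v : Fin n → S),
      (∀ i, v i ∈ 𝒮 (h * gv i)) ↔ (∀ i, e v i ∈ 𝒮 (h * hv i))) ↔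
      IsGradedEquiv (piGrading fun i => shiftGrading 𝒮 (gv i))
        (piGrading fun i => shiftGrading 𝒮 (hv i)) e := by
    simp only [IsGradedEquiv, mem_piGrading, shiftGrading, implies_true]
  simp only [hgr]
  exact ⟨fun ⟨_, he⟩ => exists_perm_of_isGradedEquiv hSsimple hSnz he,
    fun ⟨π, hπ⟩ => exists_isGradedEquiv_of_equiv π hπ⟩

/-- for a graded simple `S`,
`S(g_1) ⊕ … ⊕ S(g_n) ≅ S(h_1) ⊕ … ⊕ S(h_n)` in `R`-gr (direct sums modelled on
`Fin n → S`, with degree-`h` component `{v | ∀ i, v i ∈ S_{h·g_i}}`) iff the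
list of left cosets `g_i·Σ(S)` is a permutation of the list `h_i·Σ(S)`. -/
theorem direct_sum_of_shifts_iso_iff_cosets_permuted
    (𝒜 : G → AddSubgroup R) (h𝒜 : IsGRing 𝒜)
    {S : Type w} [AddCommGroup S] [Module R S]
    (𝒮 : G → AddSubgroup S) (hS : IsGModule 𝒜 𝒮)
    (hSnz : ∃ x : S, x ≠ 0)
    (hSsimple : ∀ x : S, x ≠ 0 → (∃ h : G, x ∈ 𝒮 h) →
      Submodule.span R {x} = (⊤ : Submodule R S))
    (n : ℕ) (gv hv : Fin n → G) :
    (∃ e : (Fin n → S) ≃ₗ[R] (Fin n → S),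
        ∀ (h : G) (v : Fin n → S),
          (∀ i, v i ∈ 𝒮 (h * gv i)) ↔ (∀ i, e v i ∈ 𝒮 (h * hv i))) ↔
      ∃ π : Equiv.Perm (Fin n), ∀ i, (gv i)⁻¹ * hv (π i) ∈ inertiaSet (R := R) 𝒮 :=
  direct_sum_of_shifts_iso_iff_cosets_permuted_general 𝒜 𝒮 hS hSnz hSsimple n gv hv
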